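/- arXiv:1011.6429 — 2 statements merged into one kernel-verified Lean document; each statement's English description precedes it below -/
import Mathlib

section
/- Let C be a non-trivial strongly connected component in BPA*01, let p ∈ C, and let q be a normed BPA*01 expression such that C·q is a strongly connected component. Then, computing exit transitions with respect to the SCC C·q: if p↓, then Extⁿ(p·q) = Extⁿ(p)·q ∪ {(a,r) | r ∉ C·q, r is normed, and q →a r}; and if not p↓, then Extⁿ(p·q) = Extⁿ(p)·q, where Extⁿ(p) is computed with respect to C and Extⁿ(p)·q = {(a,r·q) | (a,r) ∈ Extⁿ(p)}. -/
/-!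
A transition of `p·q` either moves `p`, landing in `p'·q`, which lies in `C·q` iff `p' ∈ C`
and, as `q` is normed, is normed iff `p'` is; or, only when `p↓`, it is a transition of `q`.
-/

/-- BPA*01 expressions over an action set `Act`. -/
inductive BExpr (Act : Type) : Type
  | dl : BExpr Act
  | emp : BExpr Act
  | act : Act → BExpr Act
  | seq : BExpr Act → BExpr Act → BExpr Act
  | alt : BExpr Act → BExpr Act → BExpr Act
  | star : BExpr Act → BExpr Act

variable {Act : Type}

/-- The termination predicate `↓` of BPA*01. -/
inductive BTerm : BExpr Act → Prop
  | emp : BTerm BExpr.emp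
  | altl {p q : BExpr Act} : BTerm p → BTerm (BExpr.alt p q)
  | altr {p q : BExpr Act} : BTerm q → BTerm (BExpr.alt p q)
  | seq {p q : BExpr Act} : BTerm p → BTerm q → BTerm (BExpr.seq p q)
  | star {p : BExpr Act} : BTerm (BExpr.star p)

/-- The transition relation `p →a p'` of BPA*01. -/
inductive BStep : BExpr Act → Act → BExpr Act → Prop
  | act {a : Act} : BStep (BExpr.act a) a BExpr.emp
  | altl {p q p' : BExpr Act} {a : Act} : BStep p a p' → BStep (BExpr.alt p q) a p'
  | altr {p q q' : BExpr Act} {a : Act} : BStep q a q' → BStep (BExpr.alt p q) a q'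
  | seql {p q p' : BExpr Act} {a : Act} :
      BStep p a p' → BStep (BExpr.seq p q) a (BExpr.seq p' q)
  | seqr {p q q' : BExpr Act} {a : Act} :
      BTerm p → BStep q a q' → BStep (BExpr.seq p q) a q'
  | star {p p' : BExpr Act} {a : Act} :
      BStep p a p' → BStep (BExpr.star p) a (BExpr.seq p' (BExpr.star p))

/-- `p → p'`: a transition with some label. -/
def BStepAny (p q : BExpr Act) : Prop := ∃ a, BStep p a q

/-- `p →* p'`: reachability. -/
def BReach (p q : BExpr Act) : Prop := Relation.ReflTransGen BStepAny p q

/-- `p` is normed: some terminating expression is reachable from `p`. -/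
def BNormed (p : BExpr Act) : Prop := ∃ q, BReach p q ∧ BTerm q

/-- A strongly connected component: a maximal set of mutually reachable states. -/
def IsSCC (C : Set (BExpr Act)) : Prop :=
  (∀ s ∈ C, ∀ t ∈ C, BReach s t) ∧
    ∀ D : Set (BExpr Act), C ⊆ D → (∀ s ∈ D, ∀ t ∈ D, BReach s t) → D = C

/-- A trivial SCC: a singleton `{s}` with no transition `s → s`. -/
def IsTrivialSCC (C : Set (BExpr Act)) : Prop := ∃ s, C = {s} ∧ ¬ BStepAny s s

/-- `C · q = { p · q | p ∈ C }`. -/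
def seqSet (C : Set (BExpr Act)) (q : BExpr Act) : Set (BExpr Act) :=
  (fun p => BExpr.seq p q) '' C

/-- A basic SCC: `C = C' · q*` for some set `C'` that is not an SCC. -/
def IsBasic (C : Set (BExpr Act)) : Prop :=
  ∃ (C' : Set (BExpr Act)) (q : BExpr Act), C = seqSet C' (BExpr.star q) ∧ ¬ IsSCC C'

/-- The set `Extⁿ(s)` of normed exit transitions from `s`, w.r.t. the SCC `C`. -/
def ExtN (C : Set (BExpr Act)) (s : BExpr Act) : Set (Act × BExpr Act) :=
  {e | BStep s e.1 e.2 ∧ e.2 ∉ C ∧ BNormed e.2}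

/-- `s ∈ C` is an alive exit state if `s↓` or `s` has a normed exit transition. -/
def AliveExit (C : Set (BExpr Act)) (s : BExpr Act) : Prop :=
  s ∈ C ∧ (BTerm s ∨ ∃ e, e ∈ ExtN C s)

/-- `E · q = { (a, r · q) | (a, r) ∈ E }`. -/
def extSeq (E : Set (Act × BExpr Act)) (q : BExpr Act) : Set (Act × BExpr Act) :=
  (fun e => (e.1, BExpr.seq e.2 q)) '' E

/-- Is the expression a star expression? -/
def isStarB : BExpr Act → Bool
  | BExpr.star _ => true
  | _ => false

/-- The measure `OC` on BPA*01 expressions. -/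
def OC : BExpr Act → ℕ
  | BExpr.dl => 0
  | BExpr.emp => 0
  | BExpr.act _ => 1
  | BExpr.seq _ q => if isStarB q then 0 else OC q + 1
  | BExpr.alt p q => max (OC p) (OC q) + 1
  | BExpr.star _ => 1

section Seq

variable {C : Set (BExpr Act)} {p p' q r : BExpr Act} {a : Act}

theorem bStep_seq_iff :
    BStep (BExpr.seq p q) a r ↔
      (∃ p', BStep p a p' ∧ r = BExpr.seq p' q) ∨ (BTerm p ∧ BStep q a r) := by
  constructor
  · rintro (_ | _ | _ | ⟨h⟩ | ⟨hp, h⟩ | _)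
    · exact Or.inl ⟨_, h, rfl⟩
    · exact Or.inr ⟨hp, h⟩
  · rintro (⟨p', h, rfl⟩ | ⟨hp, h⟩)
    · exact BStep.seql h
    · exact BStep.seqr hp h

theorem BReach.seq_left (h : BReach p p') : BReach (BExpr.seq p q) (BExpr.seq p' q) := by
  induction h with
  | refl => exact Relation.ReflTransGen.refl
  | tail _ hs ih =>
      obtain ⟨a, hs⟩ := hs
      exact ih.tail ⟨a, BStep.seql hs⟩

theorem BNormed.of_step (hs : BStep p a p') (h : BNormed p') : BNormed p :=
  let ⟨t, hr, ht⟩ := h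
  ⟨t, Relation.ReflTransGen.head ⟨a, hs⟩ hr, ht⟩

theorem BNormed.seq (hp : BNormed p) (hq : BNormed q) : BNormed (BExpr.seq p q) := by
  obtain ⟨p', hpr, hpt⟩ := hp
  obtain ⟨q', hqr, hqt⟩ := hq
  rcases hqr.cases_head with rfl | ⟨q1, ⟨a, hs⟩, hr⟩
  · exact ⟨BExpr.seq p' q, hpr.seq_left, BTerm.seq hpt hqt⟩
  · exact ⟨q', hpr.seq_left.trans (Relation.ReflTransGen.head ⟨a, BStep.seqr hpt hs⟩ hr), hqt⟩

theorem BNormed.of_seq (h : BNormed (BExpr.seq p q)) : BNormed p := by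
  obtain ⟨t, hr, ht⟩ := h
  generalize hx : BExpr.seq p q = x at hr
  induction hr using Relation.ReflTransGen.head_induction_on generalizing p with
  | refl =>
      subst hx
      cases ht with
      | seq hp _ => exact ⟨p, Relation.ReflTransGen.refl, hp⟩
  | head hs _ ih =>
      subst hx
      obtain ⟨a, hs⟩ := hs
      rcases bStep_seq_iff.mp hs with ⟨p', hs', rfl⟩ | ⟨hp, _⟩
      · exact (ih rfl).of_step hs'
      · exact ⟨p, Relation.ReflTransGen.refl, hp⟩

theorem seq_mem_seqSet_iff : BExpr.seq p q ∈ seqSet C q ↔ p ∈ C := by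
  constructor
  · rintro ⟨x, hx, ⟨⟩⟩
    exact hx
  · exact fun h => ⟨p, h, rfl⟩

theorem mem_extSeq_iff {E : Set (Act × BExpr Act)} {e : Act × BExpr Act} :
    e ∈ extSeq E q ↔ ∃ p', (e.1, p') ∈ E ∧ e.2 = BExpr.seq p' q := by
  constructor
  · rintro ⟨⟨b, p'⟩, he, rfl⟩
    exact ⟨p', he, rfl⟩
  · rintro ⟨p', he, hr⟩
    exact ⟨(e.1, p'), he, Prod.ext rfl hr.symm⟩

theorem mem_extN_seq_iff (hq : BNormed q) {e : Act × BExpr Act} :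
    e ∈ ExtN (seqSet C q) (BExpr.seq p q) ↔
      e ∈ extSeq (ExtN C p) q ∨
        (BTerm p ∧ e.2 ∉ seqSet C q ∧ BNormed e.2 ∧ BStep q e.1 e.2) := by
  obtain ⟨a, r⟩ := e
  simp only [ExtN, Set.mem_ofPred_eq, mem_extSeq_iff, bStep_seq_iff]
  constructor
  · rintro ⟨⟨p', hs, rfl⟩ | ⟨hp, hs⟩, hr, hn⟩
    · exact Or.inl ⟨p', ⟨hs, mt seq_mem_seqSet_iff.mpr hr, hn.of_seq⟩, rfl⟩
    · exact Or.inr ⟨hp, hr, hn, hs⟩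
  · rintro (⟨p', ⟨hs, hp', hn⟩, rfl⟩ | ⟨hp, hr, hn, hs⟩)
    · exact ⟨Or.inl ⟨p', hs, rfl⟩, mt seq_mem_seqSet_iff.mp hp', hn.seq hq⟩
    · exact ⟨Or.inr ⟨hp, hs⟩, hr, hn⟩

end Seq

theorem seq_extn_general {Act : Type} {C : Set (BExpr Act)}
    {p : BExpr Act} {q : BExpr Act} (hqn : BNormed q) :
    (BTerm p →
      ExtN (seqSet C q) (BExpr.seq p q) =
        extSeq (ExtN C p) q ∪
          {e | e.2 ∉ seqSet C q ∧ BNormed e.2 ∧ BStep q e.1 e.2}) ∧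
    (¬ BTerm p →
      ExtN (seqSet C q) (BExpr.seq p q) = extSeq (ExtN C p) q) := by
  constructor
  · intro hp
    ext e
    simp only [mem_extN_seq_iff hqn, Set.mem_union, Set.mem_ofPred_eq, hp, true_and]
  · intro hp
    ext e
    simp only [mem_extN_seq_iff hqn, hp, false_and, or_false]

/-- Let `C` be a non-trivial SCC in BPA*01, `p ∈ C`, and `q` normed
such that `C · q` is an SCC. Then, w.r.t. the SCC `C · q`:
if `p↓` then `Extⁿ(p·q) = Extⁿ(p)·q ∪ {(a,r) | r ∉ C·q, r normed, q →a r}`,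
and if `¬ p↓` then `Extⁿ(p·q) = Extⁿ(p)·q`. -/
theorem seq_extn {Act : Type} [Nonempty Act] {C : Set (BExpr Act)}
    (hC : IsSCC C) (hnt : ¬ IsTrivialSCC C)
    {p : BExpr Act} (hp : p ∈ C) {q : BExpr Act} (hqn : BNormed q)
    (hCq : IsSCC (seqSet C q)) :
    (BTerm p →
      ExtN (seqSet C q) (BExpr.seq p q) =
        extSeq (ExtN C p) q ∪
          {e | e.2 ∉ seqSet C q ∧ BNormed e.2 ∧ BStep q e.1 e.2}) ∧
    (¬ BTerm p →
      ExtN (seqSet C q) (BExpr.seq p q) = extSeq (ExtN C p) q) :=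
  seq_extn_general hqn
end

section
/- Let C be a non-trivial strongly connected component in BPA*01. If p₁ and p₂ are alive exit states in C, then Extⁿ(p₁) = Extⁿ(p₂). -/
variable {Act : Type}

/-!
Induction on `p₁`, proving together that `p₁↓ ↔ p₂↓`. Step targets are `ε` or sequential
compositions and `ε` has no steps, so a state of `C` that is not a composition is its only
state. If some step inside `C` is taken by the right operand `y` of a state `u · y` with `u↓`,
then `y` is a star `z*`: `OC` never increases along steps, while `OC (u · y) = OC y + 1` for
every other `y`. Then every state of `C` has the form `r · z*`, and a normed exit `r' · z*`
eventually terminates its left part and re-enters `C` through `z*`; so no state of `C` has a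
normed exit, and all alive exit states terminate. Otherwise every step inside `C` is a left
step, so `C = C' · w` for the SCC `C'` of left operands, and `Extⁿ` and `↓` of `u · w` in `C`
are determined by those of `u` in `C'`.
-/

section

variable {C : Set (BExpr Act)} {p q r t u v w z : BExpr Act} {a b : Act}

theorem BStep.eq_emp_or_seq (h : BStep p a q) : q = BExpr.emp ∨ ∃ u w, q = BExpr.seq u w := by
  induction h with
  | act => exact Or.inl rfl
  | altl _ ih | altr _ ih | seqr _ _ ih => exact ih
  | seql _ | star _ => exact Or.inr ⟨_, _, rfl⟩

theorem BStep.of_star (h : BStep (BExpr.star z) a t) :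
    ∃ z', t = BExpr.seq z' (BExpr.star z) ∧ BStep z a z' := by
  cases h with
  | star h => exact ⟨_, rfl, h⟩

theorem BStep.OC_le (h : BStep p a q) : OC q ≤ OC p := by
  induction h with
  | act | seql _ | star _ => simp [OC, isStarB]
  | altl _ ih | altr _ ih => simp only [OC]; omega
  | seqr _ h ih => cases h <;> simp [OC, isStarB] at ih ⊢ <;> omega

theorem BReach.OC_le (h : BReach p q) : OC q ≤ OC p := by
  induction h with
  | refl => exact le_rfl
  | tail _ hs ih => exact hs.choose_spec.OC_le.trans ih

theorem bTerm_seq_iff : BTerm (BExpr.seq p q) ↔ BTerm p ∧ BTerm q :=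
  ⟨fun | .seq hp hq => ⟨hp, hq⟩, fun ⟨hp, hq⟩ => .seq hp hq⟩

theorem BNormed.of_seq_left (h : BNormed (BExpr.seq u w)) : BNormed u := by
  obtain ⟨g, hreach, hg⟩ := h
  generalize hs : BExpr.seq u w = s at hreach
  induction hreach using Relation.ReflTransGen.head_induction_on generalizing u with
  | refl => exact ⟨u, .refl, (bTerm_seq_iff.mp (hs ▸ hg)).1⟩
  | head hstep _ ih =>
    subst hs
    obtain ⟨a, hstep⟩ := hstep
    cases hstep with
    | seql h =>
      obtain ⟨q, hq, hqt⟩ := ih rfl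
      exact ⟨q, .head ⟨a, h⟩ hq, hqt⟩
    | seqr hu _ => exact ⟨u, .refl, hu⟩

theorem BReach.seq_left_s8 (w : BExpr Act) (h : BReach u v) :
    BReach (BExpr.seq u w) (BExpr.seq v w) :=
  h.lift (BExpr.seq · w) fun _ _ ⟨a, h⟩ => ⟨a, .seql h⟩

theorem BStep.exists_eq_seq_star (h : BStep (BExpr.seq r (BExpr.star z)) a t) :
    ∃ r', t = BExpr.seq r' (BExpr.star z) := by
  cases h with
  | seql _ => exact ⟨_, rfl⟩
  | seqr _ h => exact h.of_star.imp fun _ hz => hz.1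

theorem BReach.exists_eq_seq_star (h : BReach (BExpr.seq r (BExpr.star z)) t) :
    ∃ r', t = BExpr.seq r' (BExpr.star z) := by
  induction h with
  | refl => exact ⟨r, rfl⟩
  | tail _ hs ih =>
    obtain ⟨r', rfl⟩ := ih
    exact hs.choose_spec.exists_eq_seq_star

theorem IsSCC.mem_of_reach (hC : IsSCC C) (hp : p ∈ C) (hpq : BReach p q) (hqp : BReach q p) :
    q ∈ C := by
  have hmut : ∀ s ∈ insert q C, ∀ t ∈ insert q C, BReach s t := by
    rintro s (rfl | hs) t (rfl | ht)
    · exact .refl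
    · exact hqp.trans (hC.1 p hp t ht)
    · exact (hC.1 s hs p hp).trans hpq
    · exact hC.1 s hs t ht
  exact hC.2 _ (Set.subset_insert q C) hmut ▸ Set.mem_insert q C

theorem IsSCC.eq_of_forall_ne_seq (hC : IsSCC C) (hp : p ∈ C) (hq : q ∈ C)
    (hp_seq : ∀ u w, p ≠ BExpr.seq u w) : p = q := by
  by_contra hne
  rcases (hC.1 q hq p hp).cases_tail with rfl | ⟨_, -, a, hstep⟩
  · exact hne rfl
  rcases hstep.eq_emp_or_seq with rfl | ⟨u, w, rfl⟩
  · rcases (hC.1 _ hp q hq).cases_head with rfl | ⟨_, ⟨_, h⟩, -⟩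
    · exact hne rfl
    · cases h
  · exact hp_seq u w rfl

theorem AliveExit.bTerm_of_extN_eq_empty (h : AliveExit C p) (hE : ExtN C p = ∅) : BTerm p :=
  h.2.resolve_right fun ⟨_, he⟩ => hE.subset he

def HasSeqrStepWithin (C : Set (BExpr Act)) : Prop :=
  ∃ u y t a, BExpr.seq u y ∈ C ∧ BTerm u ∧ BStep y a t ∧ t ∈ C

theorem HasSeqrStepWithin.exists_star_step (hC : IsSCC C) (h : HasSeqrStepWithin C) :
    ∃ z b t, BStep (BExpr.star z) b t ∧ t ∈ C := by
  obtain ⟨u, y, t, a, hs, -, hy, ht⟩ := h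
  have hOC : OC (BExpr.seq u y) ≤ OC y := (hC.1 t ht _ hs).OC_le.trans hy.OC_le
  cases y with
  | star z => exact ⟨z, a, t, hy, ht⟩
  | _ => simp [OC, isStarB] at hOC

theorem IsSCC.extN_eq_empty_of_star_step (hC : IsSCC C) (hzt : BStep (BExpr.star z) b t)
    (ht : t ∈ C) (hp : p ∈ C) : ExtN C p = ∅ := by
  obtain ⟨z', rfl, -⟩ := hzt.of_star
  obtain ⟨r, rfl⟩ := (hC.1 _ ht p hp).exists_eq_seq_star
  refine Set.eq_empty_of_forall_notMem fun ⟨a, e⟩ ⟨hstep, he, g, hg, hgt⟩ => he ?_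
  obtain ⟨r', rfl⟩ := hstep.exists_eq_seq_star
  obtain ⟨f, rfl⟩ := hg.exists_eq_seq_star
  have he_t := hg.tail ⟨b, .seqr (bTerm_seq_iff.mp hgt).1 hzt⟩
  exact hC.mem_of_reach hp (.single ⟨a, hstep⟩) (he_t.trans (hC.1 _ ht _ hp))

theorem IsSCC.exists_eq_seq_of_reach (hC : IsSCC C) (hno : ¬ HasSeqrStepWithin C)
    (hu : BExpr.seq u w ∈ C) (ht : t ∈ C) (h : BReach (BExpr.seq u w) t) :
    ∃ v, t = BExpr.seq v w ∧ BReach u v := by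
  generalize hs : BExpr.seq u w = s at h hu
  induction h using Relation.ReflTransGen.head_induction_on generalizing u with
  | refl => exact ⟨u, hs.symm, .refl⟩
  | head hstep hrest ih =>
    subst hs
    have hm := hC.mem_of_reach hu (.single hstep) (hrest.trans (hC.1 t ht _ hu))
    obtain ⟨a, hstep⟩ := hstep
    cases hstep with
    | seql h =>
      obtain ⟨v, rfl, hv⟩ := ih rfl hm
      exact ⟨v, rfl, .head ⟨a, h⟩ hv⟩
    | seqr hu' h => exact absurd ⟨u, w, _, a, hu, hu', h, hm⟩ hno

theorem IsSCC.preimage_seq (hC : IsSCC C) (hno : ¬ HasSeqrStepWithin C)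
    (hu : BExpr.seq u w ∈ C) : IsSCC ((BExpr.seq · w) ⁻¹' C) := by
  refine ⟨fun x hx y hy => ?_, fun D hsub hD => (Set.Subset.antisymm ?_ hsub)⟩
  · obtain ⟨v, hv, hxv⟩ := hC.exists_eq_seq_of_reach hno hx hy (hC.1 _ hx _ hy)
    cases hv
    exact hxv
  · intro d hd
    exact hC.mem_of_reach hu ((hD u (hsub hu) d hd).seq_left_s8 w) ((hD d hd u (hsub hu)).seq_left_s8 w)

theorem AliveExit.preimage_seq (h : AliveExit C (BExpr.seq u w)) :
    AliveExit ((BExpr.seq · w) ⁻¹' C) u := by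
  obtain ⟨hu, hterm | ⟨⟨a, e⟩, hstep, he, hnormed⟩⟩ := h
  · exact ⟨hu, .inl (bTerm_seq_iff.mp hterm).1⟩
  · cases hstep with
    | seql h => exact ⟨hu, .inr ⟨(a, _), h, he, hnormed.of_seq_left⟩⟩
    | seqr hu' _ => exact ⟨hu, .inl hu'⟩

theorem extN_seq_subset {x y : BExpr Act}
    (hE : ExtN ((BExpr.seq · w) ⁻¹' C) x ⊆ ExtN ((BExpr.seq · w) ⁻¹' C) y)
    (hT : BTerm x → BTerm y) : ExtN C (BExpr.seq x w) ⊆ ExtN C (BExpr.seq y w) := by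
  rintro ⟨a, e⟩ ⟨hstep, he, hnormed⟩
  cases hstep with
  | seql h =>
    obtain ⟨h', -⟩ := @hE (a, _) ⟨h, he, hnormed.of_seq_left⟩
    exact ⟨.seql h', he, hnormed⟩
  | seqr hx h => exact ⟨.seqr (hT hx) h, he, hnormed⟩

theorem IsSCC.extN_eq_and_bTerm_iff {p₁ p₂ : BExpr Act} (hC : IsSCC C)
    (h₁ : AliveExit C p₁) (h₂ : AliveExit C p₂) :
    ExtN C p₁ = ExtN C p₂ ∧ (BTerm p₁ ↔ BTerm p₂) := by
  induction p₁ generalizing C p₂ with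
  | seq u₁ w ih _ =>
    by_cases hseqr : HasSeqrStepWithin C
    · obtain ⟨z, b, t, hzt, ht⟩ := hseqr.exists_star_step hC
      have hE₁ := hC.extN_eq_empty_of_star_step hzt ht h₁.1
      have hE₂ := hC.extN_eq_empty_of_star_step hzt ht h₂.1
      exact ⟨hE₁.trans hE₂.symm,
        iff_of_true (h₁.bTerm_of_extN_eq_empty hE₁) (h₂.bTerm_of_extN_eq_empty hE₂)⟩
    · obtain ⟨u₂, rfl, -⟩ := hC.exists_eq_seq_of_reach hseqr h₁.1 h₂.1 (hC.1 _ h₁.1 _ h₂.1)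
      obtain ⟨hE, hT⟩ := ih (hC.preimage_seq hseqr h₁.1) h₁.preimage_seq h₂.preimage_seq
      refine ⟨(extN_seq_subset hE.le hT.mp).antisymm (extN_seq_subset hE.ge hT.mpr), ?_⟩
      rw [bTerm_seq_iff, bTerm_seq_iff, hT]
  | _ =>
    obtain rfl := hC.eq_of_forall_ne_seq h₁.1 h₂.1 (by simp)
    exact ⟨rfl, Iff.rfl⟩

end

theorem alive_exit_same_extn_general {Act : Type} {C : Set (BExpr Act)}
    (hC : IsSCC C)
    {p₁ p₂ : BExpr Act} (h₁ : AliveExit C p₁) (h₂ : AliveExit C p₂) :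
    ExtN C p₁ = ExtN C p₂ :=
  (hC.extN_eq_and_bTerm_iff h₁ h₂).1

/-- If `p₁` and `p₂` are alive exit states of a non-trivial SCC `C`
in BPA*01, then `Extⁿ(p₁) = Extⁿ(p₂)`. -/
theorem alive_exit_same_extn {Act : Type} [Nonempty Act] {C : Set (BExpr Act)}
    (hC : IsSCC C) (hnt : ¬ IsTrivialSCC C)
    {p₁ p₂ : BExpr Act} (h₁ : AliveExit C p₁) (h₂ : AliveExit C p₂) :
    ExtN C p₁ = ExtN C p₂ :=
  alive_exit_same_extn_general hC h₁ h₂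
end
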